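/- arXiv:0704.2802 — 3 statements merged into one kernel-verified Lean document; each statement's English description precedes it below -/
import Mathlib

section
/- Let Λ be a k-graph and let W be its path space, Y its finite path space (identified with Λ), and α : W → 2^Y the map α(w)(y) = 1 iff y ≤ w. Then an element a ∈ 2^Y lies in the image α(W) if and only if the set A_a = {y ∈ Y : a(y) = 1} satisfies: (i) A_a is nonempty; (ii) A_a is downward closed, i.e. if y₁ ≤ y₂ in Y and y₂ ∈ A_a then y₁ ∈ A_a; and (iii) A_a is directed upwards, i.e. if y₁, y₂ ∈ A_a then there exists y ∈ A_a with y₁ ≤ y and y₂ ≤ y. -/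
open Filter Topology

/-- A higher-rank graph (`k`-graph): a countable small category `Λ` together with a
degree functor `d : Λ → ℕ^k` (with `ℕ^k` viewed as a one-object category under
addition) satisfying the unique factorization property. -/
structure KGraph (k : ℕ) where
  Obj : Type
  Mor : Type
  objCountable : Countable Obj
  morCountable : Countable Mor
  r : Mor → Obj
  s : Mor → Obj
  id : Obj → Mor
  r_id : ∀ v, r (id v) = v
  s_id : ∀ v, s (id v) = v
  comp : (μ ν : Mor) → s μ = r ν → Mor
  r_comp : ∀ μ ν h, r (comp μ ν h) = r μ
  s_comp : ∀ μ ν h, s (comp μ ν h) = s ν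
  id_comp : ∀ ν (h : s (id (r ν)) = r ν), comp (id (r ν)) ν h = ν
  comp_id : ∀ μ (h : s μ = r (id (s μ))), comp μ (id (s μ)) h = μ
  assoc : ∀ l μ ν (h₁ : s l = r μ) (h₂ : s (comp l μ h₁) = r ν) (h₁' : s μ = r ν)
    (h₂' : s l = r (comp μ ν h₁')), comp (comp l μ h₁) ν h₂ = comp l (comp μ ν h₁') h₂'
  d : Mor → (Fin k → ℕ)
  d_id : ∀ v, d (id v) = 0
  d_comp : ∀ μ ν h, d (comp μ ν h) = d μ + d ν
  factor_exists : ∀ (l : Mor) (m n : Fin k → ℕ), d l = m + n →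
    ∃ (μ ν : Mor) (h : s μ = r ν), comp μ ν h = l ∧ d μ = m ∧ d ν = n
  factor_unique : ∀ (l : Mor) (m n : Fin k → ℕ), d l = m + n →
    ∀ (μ ν : Mor) (h : s μ = r ν) (μ' ν' : Mor) (h' : s μ' = r ν'),
      comp μ ν h = l → comp μ' ν' h' = l → d μ = m → d ν = n → d μ' = m → d ν' = n →
      μ = μ' ∧ ν = ν'

namespace KGraph

variable {k : ℕ} (G : KGraph k)

/-- `μ ≤ λ` in `Λ`: `λ = μν` for some `ν`. -/
def le (μ l : G.Mor) : Prop := ∃ (ν : G.Mor) (h : G.s μ = G.r ν), G.comp μ ν h = l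

/-- An element of the path space `W`: an `N`-path for some `N ∈ (ℕ ∪ {∞})^k`, i.e. a
family `{λ_m : m ∈ ℕ^k, m ≤ N}` with `d(λ_m) = m` and `λ_m ≤ λ_n` whenever `m ≤ n`. -/
structure Path where
  deg : Fin k → ℕ∞
  seg : (m : Fin k → ℕ) → (∀ i, (m i : ℕ∞) ≤ deg i) → G.Mor
  d_seg : ∀ m h, G.d (seg m h) = m
  mono : ∀ m n (hm : ∀ i, (m i : ℕ∞) ≤ deg i) (hn : ∀ i, (n i : ℕ∞) ≤ deg i),
    (∀ i, m i ≤ n i) → G.le (seg m hm) (seg n hn)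

/-- `y ≤ w` for a finite path `y ∈ Y = Λ` and `w ∈ W`: `y = w_{d(y)}`. -/
def lePath (y : G.Mor) (w : G.Path) : Prop :=
  ∃ h : ∀ i, ((G.d y) i : ℕ∞) ≤ w.deg i, w.seg (G.d y) h = y

open Classical in
/-- The map `α : W → 2^Y = {0,1}^Y`, `α(w)(y) = 1` iff `y ≤ w`. -/
noncomputable def alpha (w : G.Path) : G.Mor → Bool :=
  fun y => if G.lePath y w then true else false

end KGraph

namespace KGraph

variable {k : ℕ} {G : KGraph k}

lemma le_refl' (y : G.Mor) : G.le y y :=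
  ⟨G.id (G.s y), (G.r_id _).symm, G.comp_id y _⟩

lemma le_trans' {x y z : G.Mor} (h1 : G.le x y) (h2 : G.le y z) : G.le x z := by
  obtain ⟨ρ, hρ, rfl⟩ := h1
  obtain ⟨σ, hσ, rfl⟩ := h2
  have hρσ : G.s ρ = G.r σ := by rw [← G.s_comp x ρ hρ]; exact hσ
  have h₂' : G.s x = G.r (G.comp ρ σ hρσ) := by rw [G.r_comp]; exact hρ
  exact ⟨G.comp ρ σ hρσ, h₂', (G.assoc x ρ σ hρ hσ hρσ h₂').symm⟩

lemma d_le_of_le {μ l : G.Mor} (h : G.le μ l) : ∀ i, G.d μ i ≤ G.d l i := by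
  obtain ⟨ν, hν, rfl⟩ := h
  intro i
  rw [G.d_comp]
  simp

lemma init_unique {μ μ' z : G.Mor} (h : G.le μ z) (h' : G.le μ' z)
    (hd : G.d μ = G.d μ') : μ = μ' := by
  obtain ⟨ν, hν, rfl⟩ := h
  obtain ⟨ν', hν', hz⟩ := h'
  have hdz : G.d (G.comp μ ν hν) = G.d μ + G.d ν := G.d_comp μ ν hν
  have hdν' : G.d ν' = G.d ν := by
    have h1 : G.d (G.comp μ' ν' hν') = G.d μ' + G.d ν' := G.d_comp μ' ν' hν'
    rw [hz, hdz, ← hd] at h1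
    exact (add_left_cancel h1.symm)
  exact (G.factor_unique (G.comp μ ν hν) (G.d μ) (G.d ν) hdz μ ν hν μ' ν' hν'
    rfl hz rfl rfl hd.symm hdν').1

lemma seg_congr (w : G.Path) {m n : Fin k → ℕ} (hmn : m = n)
    (hm : ∀ i, (m i : ℕ∞) ≤ w.deg i) (hn : ∀ i, (n i : ℕ∞) ≤ w.deg i) :
    w.seg m hm = w.seg n hn := by subst hmn; rfl

lemma alpha_eq_true_iff (w : G.Path) (y : G.Mor) :
    G.alpha w y = true ↔ G.lePath y w := by
  simp [KGraph.alpha]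

end KGraph
/-- Lemma 2.1: `a ∈ 2^Y` lies in the image `α(W)` iff `A_a = {y : a(y) = 1}` is nonempty,
downward closed, and directed upwards. -/
theorem stmt0 {k : ℕ} (G : KGraph k) (a : G.Mor → Bool) :
    a ∈ Set.range G.alpha ↔
      ({y : G.Mor | a y = true}.Nonempty ∧
        (∀ y₁ y₂ : G.Mor, G.le y₁ y₂ → a y₂ = true → a y₁ = true) ∧
        (∀ y₁ y₂ : G.Mor, a y₁ = true → a y₂ = true →
          ∃ y : G.Mor, a y = true ∧ G.le y₁ y ∧ G.le y₂ y)) := by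
  constructor
  · rintro ⟨w, rfl⟩
    refine ⟨?_, ?_, ?_⟩
    · -- nonempty: the degree-0 segment
      have h0 : ∀ i, (((0 : Fin k → ℕ) i : ℕ∞)) ≤ w.deg i := by
        intro i; simp
      refine ⟨w.seg 0 h0, ?_⟩
      have hd0 : G.d (w.seg 0 h0) = 0 := w.d_seg 0 h0
      rw [Set.mem_setOf_eq, KGraph.alpha_eq_true_iff]
      refine ⟨fun i => by rw [hd0]; exact h0 i, KGraph.seg_congr w hd0 _ h0⟩
    · -- downward closed
      intro y₁ y₂ hle h2
      rw [KGraph.alpha_eq_true_iff] at h2 ⊢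
      obtain ⟨h₂, heq₂⟩ := h2
      have hd : ∀ i, G.d y₁ i ≤ G.d y₂ i := KGraph.d_le_of_le hle
      have hm : ∀ i, ((G.d y₁) i : ℕ∞) ≤ w.deg i :=
        fun i => (Nat.cast_le.mpr (hd i)).trans (h₂ i)
      have hseg : G.le (w.seg (G.d y₁) hm) (w.seg (G.d y₂) h₂) :=
        w.mono _ _ hm h₂ hd
      rw [heq₂] at hseg
      have : w.seg (G.d y₁) hm = y₁ := by
        refine KGraph.init_unique hseg hle ?_
        rw [w.d_seg]
      exact ⟨hm, this⟩
    · -- directed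
      intro y₁ y₂ h1 h2
      rw [KGraph.alpha_eq_true_iff] at h1 h2
      obtain ⟨h₁, heq₁⟩ := h1
      obtain ⟨h₂, heq₂⟩ := h2
      set m : Fin k → ℕ := fun i => max (G.d y₁ i) (G.d y₂ i) with hm_def
      have hm : ∀ i, (m i : ℕ∞) ≤ w.deg i := by
        intro i
        rcases max_cases (G.d y₁ i) (G.d y₂ i) with ⟨he, _⟩ | ⟨he, _⟩ <;>
          simp only [hm_def, he] <;> [exact h₁ i; exact h₂ i]
      refine ⟨w.seg m hm, ?_, ?_, ?_⟩
      · rw [KGraph.alpha_eq_true_iff]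
        have hd : G.d (w.seg m hm) = m := w.d_seg m hm
        exact ⟨fun i => by rw [hd]; exact hm i, KGraph.seg_congr w hd _ hm⟩
      · have := w.mono (G.d y₁) m h₁ hm (fun i => le_max_left _ _)
        rwa [heq₁] at this
      · have := w.mono (G.d y₂) m h₂ hm (fun i => le_max_right _ _)
        rwa [heq₂] at this
  · rintro ⟨⟨y0, hy0⟩, hdown, hdir⟩
    rw [Set.mem_setOf_eq] at hy0
    -- upper bounds in A for finite families
    have hub : ∀ (s : Finset (Fin k)) (f : Fin k → G.Mor), (∀ i ∈ s, a (f i) = true) →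
        ∃ y, a y = true ∧ ∀ i ∈ s, G.d (f i) i ≤ G.d y i := by
      intro s
      induction s using Finset.induction with
      | empty => exact fun f _ => ⟨y0, hy0, by simp⟩
      | @insert i s hni ih =>
        intro f hf
        obtain ⟨y, hy, hyd⟩ := ih f (fun j hj => hf j (Finset.mem_insert_of_mem hj))
        obtain ⟨z, hz, hz1, hz2⟩ := hdir (f i) y (hf i (Finset.mem_insert_self i s)) hy
        refine ⟨z, hz, fun j hj => ?_⟩
        rcases Finset.mem_insert.1 hj with rfl | hj
        · exact KGraph.d_le_of_le hz1 j
        · exact (hyd j hj).trans (KGraph.d_le_of_le hz2 j)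
    set deg : Fin k → ℕ∞ := fun i => ⨆ (y : G.Mor) (_ : a y = true), (G.d y i : ℕ∞)
      with hdeg_def
    -- witnesses: any m below deg is dominated by an element of A
    have hwit : ∀ m : Fin k → ℕ, (∀ i, (m i : ℕ∞) ≤ deg i) →
        ∃ y, a y = true ∧ ∀ i, m i ≤ G.d y i := by
      intro m hm
      have hcoord : ∀ i, ∃ y, a y = true ∧ m i ≤ G.d y i := by
        intro i
        by_contra hcon
        push_neg at hcon
        have hmi : 1 ≤ m i := by
          by_contra h
          exact absurd (hcon y0 hy0) (by omega)
        have hle : deg i ≤ ((m i - 1 : ℕ) : ℕ∞) := by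
          rw [hdeg_def]
          refine iSup₂_le fun z hz => Nat.cast_le.mpr ?_
          have := hcon z hz
          omega
        have := (hm i).trans hle
        rw [Nat.cast_le] at this
        omega
      choose f hf1 hf2 using hcoord
      obtain ⟨y, hy, hyd⟩ := hub Finset.univ f (fun i _ => hf1 i)
      exact ⟨y, hy, fun i => (hf2 i).trans (hyd i (Finset.mem_univ i))⟩
    -- the canonical degree-m initial segment
    have hseg : ∀ m : Fin k → ℕ, (∀ i, (m i : ℕ∞) ≤ deg i) →
        ∃ μ, a μ = true ∧ G.d μ = m ∧
          ∀ z, a z = true → (∀ i, m i ≤ G.d z i) → G.le μ z := by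
      intro m hm
      obtain ⟨y, hy, hyd⟩ := hwit m hm
      obtain ⟨μ, ν, hν, hcomp, hdμ, hdν⟩ := G.factor_exists y m (fun i => G.d y i - m i)
        (by funext i; have := hyd i; simp only [Pi.add_apply]; omega)
      have hμy : G.le μ y := ⟨ν, hν, hcomp⟩
      refine ⟨μ, hdown μ y hμy hy, hdμ, ?_⟩
      intro z hz hzd
      obtain ⟨u, hu, hyu, hzu⟩ := hdir y z hy hz
      obtain ⟨μ', ν', hν', hcomp', hdμ', hdν'⟩ := G.factor_exists z m (fun i => G.d z i - m i)
        (by funext i; have := hzd i; simp only [Pi.add_apply]; omega)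
      have hμ'z : G.le μ' z := ⟨ν', hν', hcomp'⟩
      have heq : μ' = μ :=
        KGraph.init_unique (KGraph.le_trans' hμ'z hzu) (KGraph.le_trans' hμy hyu)
          (hdμ'.trans hdμ.symm)
      rw [← heq]
      exact hμ'z
    choose seg hseg1 hseg2 hseg3 using hseg
    set W : G.Path :=
      { deg := deg
        seg := seg
        d_seg := hseg2
        mono := by
          intro m n hm hn hmn
          exact hseg3 m hm (seg n hn) (hseg1 n hn)
            (fun i => by rw [hseg2 n hn]; exact hmn i) } with hW_def
    refine ⟨W, funext fun y => ?_⟩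
    by_cases hy : a y = true
    · rw [hy, KGraph.alpha]
      rw [if_pos]
      have hdy : ∀ i, ((G.d y) i : ℕ∞) ≤ W.deg i := by
        intro i
        exact le_iSup₂ (f := fun (z : G.Mor) (_ : a z = true) => ((G.d z i : ℕ∞))) y hy
      refine ⟨hdy, ?_⟩
      refine KGraph.init_unique (μ := W.seg (G.d y) hdy) (z := y) ?_ (KGraph.le_refl' y) ?_
      · exact hseg3 (G.d y) hdy y hy (fun i => le_rfl)
      · rw [W.d_seg]
    · rw [KGraph.alpha]
      have hnot : ¬ G.lePath y W := by
        rintro ⟨h, heq⟩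
        exact hy (heq ▸ hseg1 (G.d y) h)
      rw [if_neg hnot]
      exact ((Bool.not_eq_true (a y)).mp hy).symm
end

section
/- Let E be a countable directed graph, v a vertex, and W_v = Y_v ∪ Z_v the space of finite and infinite paths starting at v, with the topology of pointwise convergence on the set Y of finite paths (via the map α). Then a sequence w^n converges to w in W_v if and only if: either (a) ℓ(w) = ∞, in which case ℓ(w^n) → ∞ and w^n_i → w_i (i.e. w^n_i = w_i eventually) for every i; or (b) ℓ(w) < ∞, in which case eventually ℓ(w^n) ≥ ℓ(w), for each 1 ≤ i ≤ ℓ(w) eventually w^n_i = w_i, and w^n_{ℓ(w)+1} → ∞, meaning: for every finite set F of edges, eventually either ℓ(w^n) = ℓ(w) or the (ℓ(w)+1)-th edge of w^n lies outside F. -/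
open Filter Topology

/-- A directed graph with countable sets of vertices and edges, with source and
range maps. -/
structure DGraph where
  V : Type
  E : Type
  vCountable : Countable V
  eCountable : Countable E
  src : E → V
  rng : E → V

namespace DGraph

variable (G : DGraph)

/-- A (finite or infinite) path in the graph: a length `ℓ ∈ ℕ ∪ {∞}`, a starting
vertex, and a composable sequence of edges `w₁w₂…` (indexed from `0` here) starting at
that vertex.  A path of length `0` is just its starting vertex. -/
structure PathW where
  len : ℕ∞
  start : G.V
  edge : (i : ℕ) → ((i : ℕ∞) < len) → G.E
  src_first : ∀ h : ((0 : ℕ) : ℕ∞) < len, G.src (edge 0 h) = start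
  link : ∀ (i : ℕ) (h₁ : ((i : ℕ) : ℕ∞) < len) (h₂ : (((i + 1 : ℕ)) : ℕ∞) < len),
    G.rng (edge i h₁) = G.src (edge (i + 1) h₂)

/-- The set `Y` of finite paths, as a type. -/
def FinPath := {p : G.PathW // p.len ≠ ⊤}

/-- `y ≤ w`: the finite path `y` is an initial segment of `w`. -/
def initSeg (y w : G.PathW) : Prop :=
  y.len ≤ w.len ∧ y.start = w.start ∧
    ∀ (i : ℕ) (h₁ : (i : ℕ∞) < y.len) (h₂ : (i : ℕ∞) < w.len), y.edge i h₁ = w.edge i h₂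

open Classical in
/-- The map `α : W → 2^Y = {0,1}^Y`, `α(w)(y) = 1` iff `y ≤ w`. -/
noncomputable def alpha (w : G.PathW) : G.FinPath → Bool :=
  fun y => if G.initSeg y.1 w then true else false

/-- The topology of pointwise convergence on `Y`: the topology pulled back from the
product topology on `2^Y` via the injection `α`. -/
noncomputable instance : TopologicalSpace G.PathW :=
  TopologicalSpace.induced G.alpha inferInstance

/-- `E` is row-finite: each vertex emits only finitely many edges. -/
def rowFinite : Prop := ∀ v : G.V, {e : G.E | G.src e = v}.Finite

end DGraph

open Filter Topology

namespace DGraph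
variable (G : DGraph)

/-- Truncation of a path to length `m`. -/
def trunc (w : G.PathW) (m : ℕ) (hm : (m : ℕ∞) ≤ w.len) : G.PathW where
  len := m
  start := w.start
  edge i h := w.edge i (lt_of_lt_of_le h hm)
  src_first h := w.src_first _
  link i h₁ h₂ := w.link i _ _

lemma trunc_initSeg (w : G.PathW) (m : ℕ) (hm : (m : ℕ∞) ≤ w.len) :
    G.initSeg (G.trunc w m hm) w :=
  ⟨hm, rfl, fun _ _ _ => rfl⟩

end DGraph

theorem key (G : DGraph) (wseq : ℕ → G.PathW) (w : G.PathW) :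
    Filter.Tendsto wseq Filter.atTop (nhds w) ↔
      ∀ y : G.FinPath, ∀ᶠ n in atTop, (G.initSeg y.1 (wseq n) ↔ G.initSeg y.1 w) := by
  rw [nhds_induced, tendsto_comap_iff, tendsto_pi_nhds]
  refine forall_congr' fun y => ?_
  rw [nhds_discrete, tendsto_pure]
  refine eventually_congr (Eventually.of_forall fun n => ?_)
  simp only [Function.comp, DGraph.alpha]
  by_cases h1 : G.initSeg y.1 (wseq n) <;> by_cases h2 : G.initSeg y.1 w <;> simp [h1, h2]


/-- Convergence of sequences in `W_v`: `w^n → w` iff either (a) `ℓ(w) = ∞`, `ℓ(w^n) → ∞`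
and `w^n_i = w_i` eventually for every `i`, or (b) `ℓ(w) < ∞`, eventually
`ℓ(w^n) ≥ ℓ(w)`, for each `i ≤ ℓ(w)` eventually `w^n_i = w_i`, and
`w^n_{ℓ(w)+1} → ∞`: for every finite set `F` of edges, eventually either
`ℓ(w^n) = ℓ(w)` or the `(ℓ(w)+1)`-th edge of `w^n` exists and lies outside `F`.
(Edges here are indexed from `0`, so the `(ℓ(w)+1)`-th edge is `edge ℓ(w)`.) -/
theorem stmt4 (G : DGraph) (v : G.V) (wseq : ℕ → G.PathW) (w : G.PathW)
    (hseq : ∀ n, (wseq n).start = v) (hw : w.start = v) :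
    Filter.Tendsto wseq Filter.atTop (nhds w) ↔
      ((w.len = ⊤ ∧
          (∀ M : ℕ, ∀ᶠ n in Filter.atTop, (M : ℕ∞) ≤ (wseq n).len) ∧
          (∀ i : ℕ, ∀ᶠ n in Filter.atTop,
            ∃ (h₁ : (i : ℕ∞) < (wseq n).len) (h₂ : (i : ℕ∞) < w.len),
              (wseq n).edge i h₁ = w.edge i h₂)) ∨
        (w.len ≠ ⊤ ∧
          (∀ᶠ n in Filter.atTop, w.len ≤ (wseq n).len) ∧
          (∀ (i : ℕ) (h₂ : (i : ℕ∞) < w.len), ∀ᶠ n in Filter.atTop,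
            ∃ h₁ : (i : ℕ∞) < (wseq n).len, (wseq n).edge i h₁ = w.edge i h₂) ∧
          (∀ F : Set G.E, F.Finite → ∀ᶠ n in Filter.atTop,
            (wseq n).len = w.len ∨
              ∃ h₁ : (w.len.toNat : ℕ∞) < (wseq n).len,
                (wseq n).edge w.len.toNat h₁ ∉ F))) := by
  rw [key G wseq w]
  constructor
  · intro H
    have A : ∀ (m : ℕ) (hm : (m : ℕ∞) ≤ w.len),
        ∀ᶠ n in atTop, G.initSeg (G.trunc w m hm) (wseq n) := by
      intro m hm
      have h := H ⟨G.trunc w m hm, show (m : ℕ∞) ≠ ⊤ by simp⟩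
      filter_upwards [h] with n hn
      exact hn.mpr (G.trunc_initSeg w m hm)
    by_cases hT : w.len = ⊤
    · left
      refine ⟨hT, fun M => ?_, fun i => ?_⟩
      · filter_upwards [A M (by rw [hT]; exact le_top)] with n hn
        exact hn.1
      · filter_upwards [A (i + 1) (by rw [hT]; exact le_top)] with n hn
        have hi : (i : ℕ∞) < ((i + 1 : ℕ) : ℕ∞) := by exact_mod_cast Nat.lt_succ_self i
        have h₁ : (i : ℕ∞) < (wseq n).len := lt_of_lt_of_le hi hn.1
        have h₂ : (i : ℕ∞) < w.len := by rw [hT]; exact lt_of_lt_of_le hi le_top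
        exact ⟨h₁, h₂, (hn.2.2 i hi h₁).symm⟩
    · right
      set L := w.len.toNat with hLdef
      have hL : w.len = (L : ℕ∞) := (ENat.coe_toNat hT).symm
      have hmL : (L : ℕ∞) ≤ w.len := hL.ge
      refine ⟨hT, ?_, ?_, ?_⟩
      · filter_upwards [A L hmL] with n hn
        rw [hL]; exact hn.1
      · intro i h₂
        have hi : (i : ℕ∞) < (L : ℕ∞) := hL ▸ h₂
        filter_upwards [A L hmL] with n hn
        have h₁ : (i : ℕ∞) < (wseq n).len := lt_of_lt_of_le hi hn.1
        exact ⟨h₁, (hn.2.2 i hi h₁).symm⟩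
      · intro F hF
        have hev : ∀ e ∈ F, ∀ᶠ n in atTop, ∀ y : G.PathW,
            y.len = ((L + 1 : ℕ) : ℕ∞) → G.initSeg (G.trunc w L hmL) y →
            (∀ h : ((L : ℕ) : ℕ∞) < y.len, y.edge L h = e) →
            ¬ G.initSeg y (wseq n) := by
          intro e _
          by_cases hP : ∃ y : G.PathW, y.len = ((L + 1 : ℕ) : ℕ∞) ∧
              G.initSeg (G.trunc w L hmL) y ∧
              ∀ h : ((L : ℕ) : ℕ∞) < y.len, y.edge L h = e
          · obtain ⟨y₀, hy₀len, hy₀i, hy₀e⟩ := hP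
            have hy₀w : ¬ G.initSeg y₀ w := by
              intro hc
              have h := hc.1
              rw [hy₀len, hL] at h
              have : L + 1 ≤ L := by exact_mod_cast h
              omega
            have hH := H ⟨y₀, by rw [hy₀len]; push_cast; exact WithTop.add_ne_top.2 ⟨WithTop.coe_ne_top, WithTop.one_ne_top⟩⟩
            filter_upwards [hH] with n hn y hylen hyi hye hyw
            apply hy₀w
            apply hn.mp
            have hLy : ((L : ℕ) : ℕ∞) < y.len := by
              rw [hylen]; exact_mod_cast Nat.lt_succ_self L
            have hLy₀ : ((L : ℕ) : ℕ∞) < y₀.len := by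
              rw [hy₀len]; exact_mod_cast Nat.lt_succ_self L
            refine ⟨by rw [hy₀len, ← hylen]; exact hyw.1,
              hy₀i.2.1.symm.trans (hyi.2.1.trans hyw.2.1), fun i hi₁ hi₂ => ?_⟩
            have hiL1 : i < L + 1 := by
              have := hy₀len ▸ hi₁
              exact_mod_cast this
            by_cases hiL : i < L
            · have hitr : (i : ℕ∞) < (G.trunc w L hmL).len := show (i : ℕ∞) < ((L : ℕ) : ℕ∞) by exact_mod_cast hiL
              have hiy : (i : ℕ∞) < y.len := by
                rw [hylen]; exact_mod_cast hiL1
              exact (hy₀i.2.2 i hitr hi₁).symm.trans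
                ((hyi.2.2 i hitr hiy).trans (hyw.2.2 i hiy hi₂))
            · have hEq : i = L := by omega
              subst hEq
              exact (hy₀e hi₁).trans ((hye hLy).symm.trans (hyw.2.2 L hLy hi₂))
          · exact Eventually.of_forall fun n y hylen hyi hye _ => hP ⟨y, hylen, hyi, hye⟩
        filter_upwards [A L hmL, (eventually_all_finite hF).2 hev] with n hn hFn
        by_cases hlen : (wseq n).len = w.len
        · exact Or.inl hlen
        · have h₁ : ((L : ℕ) : ℕ∞) < (wseq n).len :=
            lt_of_le_of_ne hn.1 fun hc => hlen (by rw [hL, hc])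
          refine Or.inr ⟨h₁, fun heF => ?_⟩
          have hle : ((L + 1 : ℕ) : ℕ∞) ≤ (wseq n).len := by
            push_cast
            exact Order.add_one_le_of_lt h₁
          refine hFn _ heF (G.trunc (wseq n) (L + 1) hle) rfl
            ⟨show ((L : ℕ) : ℕ∞) ≤ ((L + 1 : ℕ) : ℕ∞) by exact_mod_cast Nat.le_succ L,
             show w.start = (wseq n).start by rw [hw, hseq n],
             fun i hi1 hi2 => hn.2.2 i hi1 (lt_of_lt_of_le hi2 hle)⟩
            (fun h => rfl) (G.trunc_initSeg _ _ _)
  · rintro (⟨hT, hM, hE⟩ | ⟨hT, hlen, hE, hEsc⟩) y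
    · by_cases hyw : G.initSeg y.1 w
      · set k := y.1.len.toNat with hkdef
        have hky : y.1.len = (k : ℕ∞) := (ENat.coe_toNat y.2).symm
        have hall : ∀ᶠ n in atTop, ∀ i ∈ Set.Iio k,
            ∃ (h₁ : (i : ℕ∞) < (wseq n).len) (h₂ : (i : ℕ∞) < w.len),
              (wseq n).edge i h₁ = w.edge i h₂ :=
          (eventually_all_finite (Set.finite_Iio k)).2 fun i _ => hE i
        filter_upwards [hM k, hall] with n h1 h2
        refine iff_of_true ⟨by rw [hky]; exact h1,
          hyw.2.1.trans (hw.trans (hseq n).symm), fun i hi1 hi2 => ?_⟩ hyw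
        have hik : i ∈ Set.Iio k := by
          have h := hi1
          rw [hky] at h
          exact_mod_cast h
        obtain ⟨g₁, g₂, geq⟩ := h2 i hik
        exact (hyw.2.2 i hi1 g₂).trans geq.symm
      · by_cases hst : y.1.start = w.start
        · have hmis : ∃ (i : ℕ) (h₁ : (i : ℕ∞) < y.1.len) (h₂ : (i : ℕ∞) < w.len),
              y.1.edge i h₁ ≠ w.edge i h₂ := by
            by_contra hc
            push_neg at hc
            exact hyw ⟨by rw [hT]; exact le_top, hst, hc⟩
          obtain ⟨i, h₁, h₂, hne⟩ := hmis
          filter_upwards [hE i] with n hn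
          refine iff_of_false (fun hc => ?_) hyw
          obtain ⟨g₁, g₂, geq⟩ := hn
          exact hne ((hc.2.2 i h₁ g₁).trans geq)
        · refine Eventually.of_forall fun n => iff_of_false (fun hc => hst ?_) hyw
          rw [hc.2.1, hseq n, ← hw]
    · set L := w.len.toNat with hLdef
      have hL : w.len = (L : ℕ∞) := (ENat.coe_toNat hT).symm
      by_cases hyw : G.initSeg y.1 w
      · set k := y.1.len.toNat with hkdef
        have hky : y.1.len = (k : ℕ∞) := (ENat.coe_toNat y.2).symm
        have hky' : ∀ i ∈ Set.Iio k, (i : ℕ∞) < w.len := by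
          intro i hi
          have h1 : (i : ℕ∞) < y.1.len := by rw [hky]; exact_mod_cast hi
          exact lt_of_lt_of_le h1 hyw.1
        have hall : ∀ᶠ n in atTop, ∀ i ∈ Set.Iio k,
            ∃ (h₁ : (i : ℕ∞) < (wseq n).len) (h₂ : (i : ℕ∞) < w.len),
              (wseq n).edge i h₁ = w.edge i h₂ :=
          (eventually_all_finite (Set.finite_Iio k)).2 fun i hi =>
            (hE i (hky' i hi)).mono fun n hex => ⟨hex.choose, hky' i hi, hex.choose_spec⟩
        filter_upwards [hlen, hall] with n h1 h2
        refine iff_of_true ⟨hyw.1.trans h1,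
          hyw.2.1.trans (hw.trans (hseq n).symm), fun i hi1 hi2 => ?_⟩ hyw
        have hik : i ∈ Set.Iio k := by
          have h := hi1
          rw [hky] at h
          exact_mod_cast h
        obtain ⟨g₁, g₂, geq⟩ := h2 i hik
        exact (hyw.2.2 i hi1 g₂).trans geq.symm
      · by_cases hst : y.1.start = w.start
        · by_cases hed : ∀ (i : ℕ) (h₁ : (i : ℕ∞) < y.1.len) (h₂ : (i : ℕ∞) < w.len),
              y.1.edge i h₁ = w.edge i h₂
          · have hlt : w.len < y.1.len := by
              by_contra hc
              push_neg at hc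
              exact hyw ⟨hc, hst, hed⟩
            have hLy : ((L : ℕ) : ℕ∞) < y.1.len := hL ▸ hlt
            filter_upwards [hEsc {y.1.edge L hLy} (Set.finite_singleton _), hlen]
              with n hesc hln
            refine iff_of_false (fun hc => ?_) hyw
            have hWn : w.len < (wseq n).len := lt_of_lt_of_le hlt hc.1
            rcases hesc with hq | ⟨g₁, hnotin⟩
            · exact absurd hq (ne_of_gt hWn)
            · exact hnotin (Set.mem_singleton_iff.2 (hc.2.2 L hLy g₁).symm)
          · push_neg at hed
            obtain ⟨i, h₁, h₂, hne⟩ := hed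
            filter_upwards [hE i h₂] with n hn
            refine iff_of_false (fun hc => ?_) hyw
            obtain ⟨g₁, geq⟩ := hn
            exact hne ((hc.2.2 i h₁ g₁).trans geq)
        · refine Eventually.of_forall fun n => iff_of_false (fun hc => hst ?_) hyw
          rw [hc.2.1, hseq n, ← hw]
end

section
/- For n = 1, 2, 3, …, let X_n be a locally compact, second countable, Hausdorff topological space, let A = Π_{n=1}^∞ X_n^∞ be the product of the one-point compactifications X_n^∞ of the X_n, and let W_0 = ({0} ∪ ∪_{k=1}^∞ X_1 × ⋯ × X_k) ∪ Π_{n=1}^∞ X_n be equipped with the quotient topology induced by the truncation map Q : A → W_0. Then W_0 is a compact metrizable space. -/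
open Filter Topology

/-- The set `W₀ = Y₀ ∪ Z`: the disjoint union of the finite products
`Y^k = X_1 × ⋯ × X_k` (with `Y^0 = {0}` a single point, the empty string) and the
infinite product `Z = Π_{n} X_n`.  (Indices are `0`-based here: `X 0, X 1, …` play the
roles of `X_1, X_2, …`.) -/
def W0 (X : ℕ → Type) : Type := (Σ k : ℕ, ∀ i : Fin k, X i) ⊕ (∀ n, X n)

namespace W0

variable {X : ℕ → Type}

/-- A finite string, an element of `Y₀ = ∪_k Y^k ⊂ W₀`. -/
def fin (p : Σ k : ℕ, ∀ i : Fin k, X i) : W0 X := Sum.inl p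

/-- An infinite string, an element of `Z = Π_n X_n ⊂ W₀`. -/
def inf (z : ∀ n, X n) : W0 X := Sum.inr z

/-- The point `0`, the empty string: the unique element of `Y^0`. -/
def zero : W0 X := Sum.inl ⟨0, fun i => i.elim0⟩

/-- The length `ℓ(w) ∈ ℕ ∪ {∞}` of an element of `W₀`. -/
def len : W0 X → ℕ∞ := Sum.elim (fun p => (p.1 : ℕ∞)) (fun _ => ⊤)

/-- The `i`-th coordinate of an element of `W₀`, as an element of the one-point
compactification `X_i^∞`; it is taken to be `∞_i` when `i ≥ ℓ(w)`. -/
def coord (w : W0 X) (i : ℕ) : OnePoint (X i) :=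
  Sum.elim
    (fun p : Σ k : ℕ, ∀ j : Fin k, X j =>
      if h : i < p.1 then ((p.2 ⟨i, h⟩ : X i) : OnePoint (X i)) else OnePoint.infty)
    (fun z => ((z i : X i) : OnePoint (X i))) w

/-- The value of a point of `X^∞` other than `∞`. -/
noncomputable def val {Y : Type} (o : OnePoint Y) (h : o ≠ OnePoint.infty) : Y :=
  (OnePoint.ne_infty_iff_exists.mp h).choose

open Classical in
/-- The truncation map `Q : A = Π_n X_n^∞ → W₀`: `Q({x_i}) = {x_i} ∈ Z` if no
coordinate is a point at infinity; `Q({x_i}) = (x_1, …, x_n) ∈ Y^n` if `n` is smallest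
with `x_{n+1} = ∞_{n+1}`; `Q({x_i}) = 0` if `x_1 = ∞_1`. -/
noncomputable def Q (x : ∀ n, OnePoint (X n)) : W0 X :=
  if h : ∃ n, x n = OnePoint.infty then
    fin ⟨Nat.find h, fun i => val (x i) (Nat.find_min h i.isLt)⟩
  else
    inf fun n => val (x n) (fun hn => h ⟨n, hn⟩)

/-- `W₀` carries the quotient topology induced by the surjection `Q` from the product
`A = Π_n X_n^∞` of the one-point compactifications. -/
noncomputable instance [∀ n, TopologicalSpace (X n)] : TopologicalSpace (W0 X) :=
  TopologicalSpace.coinduced Q Pi.topologicalSpace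

end W0

/-! The product `A = Π_n X_n^∞` is compact, and second countable because each `X_n^∞` is.
Two points of `A` have the same truncation iff at every index they agree or have already
passed a common `∞`; this is a closed condition on `A × A`, so `Q` is a proper map. A proper
surjection with closed kernel has a Hausdorff target, and it carries a countable basis of
the source (finite unions of basic sets covering a compact fibre) to one of the target.
Compact, Hausdorff and second countable, `W₀` is metrizable by Urysohn's theorem. -/

section ProperQuotient

open Set TopologicalSpace

variable {α β : Type*} [TopologicalSpace α] [TopologicalSpace β] {f : α → β}

theorem Topology.IsQuotientMap.isProperMap_of_isClosed_ker [CompactSpace α]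
    (hf : IsQuotientMap f) (hker : IsClosed {p : α × α | f p.1 = f p.2}) : IsProperMap f := by
  refine isProperMap_iff_isClosedMap_and_compact_fibers.2 ⟨hf.continuous, fun C hC => ?_, ?_⟩
  · have hsat : f ⁻¹' (f '' C) = Prod.fst '' ({p : α × α | f p.1 = f p.2} ∩ univ ×ˢ C) := by
      ext x
      simp [eq_comm, and_comm]
    rw [← hf.isClosed_preimage, hsat]
    exact isClosedMap_fst_of_compactSpace _ (hker.inter (isClosed_univ.prod hC))
  · intro y
    obtain ⟨a, rfl⟩ := hf.surjective y
    exact (hker.preimage (continuous_id.prodMk continuous_const)).isCompact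

theorem IsProperMap.t2Space_of_isClosed_ker (hf : IsProperMap f) (hs : Function.Surjective f)
    (hker : IsClosed {p : α × α | f p.1 = f p.2}) : T2Space β := by
  have hdiag : diagonal β = Prod.map f f '' {p : α × α | f p.1 = f p.2} := by
    ext ⟨y, y'⟩
    simp only [mem_diagonal_iff, mem_image, mem_ofPred_eq, Prod.exists, Prod.map_apply,
      Prod.mk.injEq]
    constructor
    · rintro rfl
      obtain ⟨a, rfl⟩ := hs y
      exact ⟨a, a, rfl, rfl, rfl⟩
    · rintro ⟨a, b, hab, rfl, rfl⟩
      exact hab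
  rw [t2_iff_isClosed_diagonal, hdiag]
  exact (hf.prodMap hf).isClosedMap _ hker

theorem IsProperMap.secondCountableTopology [SecondCountableTopology α] (hf : IsProperMap f)
    (hs : Function.Surjective f) : SecondCountableTopology β := by
  have hb := isBasis_countableBasis α
  refine IsTopologicalBasis.secondCountableTopology
    (b := (fun t : Set (Set α) => (f '' (⋃₀ t)ᶜ)ᶜ) '' {t | t.Finite ∧ t ⊆ countableBasis α}) ?_
    ((countable_ofPred_finite_subset (countable_countableBasis α)).image _)
  refine isTopologicalBasis_of_isOpen_of_nhds ?_ fun y u hyu hu => ?_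
  · rintro _ ⟨t, ⟨-, ht⟩, rfl⟩
    exact (hf.isClosedMap _
      (isOpen_sUnion fun s hs => hb.isOpen (ht hs)).isClosed_compl).isOpen_compl
  · have hcover : f ⁻¹' {y} ⊆ ⋃ v ∈ {v | v ∈ countableBasis α ∧ v ⊆ f ⁻¹' u}, v := by
      intro x hx
      obtain ⟨v, hv, hxv, hvu⟩ := hb.exists_subset_of_mem_open
        (show f x ∈ u from (mem_singleton_iff.1 hx).symm ▸ hyu) (hu.preimage hf.continuous)
      exact mem_biUnion ⟨hv, hvu⟩ hxv
    have hfibre : IsCompact (f ⁻¹' {y}) := hf.isCompact_preimage isCompact_singleton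
    obtain ⟨t, hts, htf, hft⟩ :=
      hfibre.elim_finite_subcover_image (fun v hv => hb.isOpen hv.1) hcover
    refine ⟨_, ⟨t, ⟨htf, fun v hv => (hts hv).1⟩, rfl⟩, ?_, ?_⟩
    · rintro ⟨x, hxt, rfl⟩
      exact hxt (sUnion_eq_biUnion ▸ hft rfl)
    · intro z hz
      obtain ⟨x, rfl⟩ := hs z
      obtain ⟨v, hvt, hxv⟩ := not_notMem.1 fun hx => hz ⟨x, hx, rfl⟩
      exact (hts hvt).2 hxv

end ProperQuotient

open Set TopologicalSpace in
instance OnePoint.secondCountableTopology {Y : Type*} [TopologicalSpace Y]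
    [LocallyCompactSpace Y] [SecondCountableTopology Y] [T2Space Y] :
    SecondCountableTopology (OnePoint Y) := by
  let K : CompactExhaustion Y := CompactExhaustion.choice Y
  have hb := isBasis_countableBasis Y
  refine IsTopologicalBasis.secondCountableTopology
    (b := ((fun s => ((↑) : Y → OnePoint Y) '' s) '' countableBasis Y) ∪
      range fun n => (((↑) : Y → OnePoint Y) '' K n)ᶜ) ?_
    (((countable_countableBasis Y).image _).union (countable_range _))
  refine isTopologicalBasis_of_isOpen_of_nhds ?_ fun x u hxu hu => ?_
  · rintro s (⟨t, ht, rfl⟩ | ⟨n, rfl⟩)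
    · exact OnePoint.isOpen_image_coe.2 (hb.isOpen ht)
    · exact OnePoint.isOpen_compl_image_coe.2 ⟨(K.isCompact n).isClosed, K.isCompact n⟩
  induction x using OnePoint.rec with
  | infty =>
    obtain ⟨n, hn⟩ := K.exists_superset_of_isCompact ((OnePoint.isOpen_iff_of_mem' hxu).1 hu).1
    refine ⟨_, Or.inr ⟨n, rfl⟩, OnePoint.infty_notMem_image_coe, fun z hz => ?_⟩
    induction z using OnePoint.rec with
    | infty => exact hxu
    | coe y => exact not_not.1 fun hyu => hz (mem_image_of_mem _ (hn hyu))
  | coe y =>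
    obtain ⟨v, hv, hyv, hvu⟩ :=
      hb.exists_subset_of_mem_open hxu (hu.preimage OnePoint.continuous_coe)
    exact ⟨_, Or.inl ⟨v, hv, rfl⟩, mem_image_of_mem _ hyv, image_subset_iff.2 hvu⟩

namespace W0

variable {X : ℕ → Type}

theorem coe_val {Y : Type} (o : OnePoint Y) (h : o ≠ OnePoint.infty) :
    ((val o h : Y) : OnePoint Y) = o :=
  (OnePoint.ne_infty_iff_exists.mp h).choose_spec

theorem fin_mk_eq_fin_mk {k k' : ℕ} (f : ∀ i : Fin k, X i) (g : ∀ i : Fin k', X i) (hk : k = k')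
    (h : ∀ i (hi : i < k) (hi' : i < k'), f ⟨i, hi⟩ = g ⟨i, hi'⟩) : fin ⟨k, f⟩ = fin ⟨k', g⟩ := by
  subst hk
  congr
  funext i
  exact h i i.isLt i.isLt

theorem Q_coord (w : W0 X) : Q (coord w) = w := by
  classical
  rcases w with ⟨k, p⟩ | z
  · change Q (coord (fin ⟨k, p⟩)) = fin ⟨k, p⟩
    have hk : coord (fin ⟨k, p⟩) k = OnePoint.infty := dif_neg (lt_irrefl k)
    have hex : ∃ n, coord (fin ⟨k, p⟩) n = OnePoint.infty := ⟨k, hk⟩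
    have hfind : Nat.find hex = k := by
      refine (Nat.find_eq_iff hex).2 ⟨hk, fun m hm => ?_⟩
      simp [coord, fin, hm]
    rw [Q, dif_pos hex]
    refine fin_mk_eq_fin_mk _ _ hfind fun i _ hi => OnePoint.coe_injective ?_
    rw [coe_val]
    exact dif_pos hi
  · change Q (coord (inf z)) = inf z
    have hne : ¬ ∃ n, coord (inf z) n = OnePoint.infty := by simp [coord, inf]
    rw [Q, dif_neg hne]
    exact congrArg Sum.inr (funext fun n => OnePoint.coe_injective (coe_val _ _))

theorem Q_surjective : Function.Surjective (Q : (∀ n, OnePoint (X n)) → W0 X) :=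
  Function.LeftInverse.surjective Q_coord

theorem coord_injective : Function.Injective (coord : W0 X → ∀ n, OnePoint (X n)) :=
  Function.LeftInverse.injective Q_coord

open Classical in
theorem coord_Q (x : ∀ n, OnePoint (X n)) (n : ℕ) :
    coord (Q x) n = if ∃ m < n, x m = OnePoint.infty then OnePoint.infty else x n := by
  by_cases hx : ∃ k, x k = OnePoint.infty
  · have hmin : (∃ m < n, x m = OnePoint.infty) ↔ Nat.find hx < n :=
      ⟨fun ⟨m, hm, hxm⟩ => (Nat.find_min' hx hxm).trans_lt hm,
        fun h => ⟨_, h, Nat.find_spec hx⟩⟩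
    rw [Q, dif_pos hx]
    simp only [coord, fin, Sum.elim_inl, hmin]
    split_ifs with h1 h2 h2
    · omega
    · exact coe_val _ _
    · rfl
    · exact (le_antisymm (not_lt.1 h2) (not_lt.1 h1) ▸ Nat.find_spec hx).symm
  · rw [Q, dif_neg hx]
    simp only [coord, inf, Sum.elim_inr, coe_val]
    exact (if_neg fun ⟨m, _, hm⟩ => hx ⟨m, hm⟩).symm

theorem coord_Q_eq_infty_iff (x : ∀ n, OnePoint (X n)) (n : ℕ) :
    coord (Q x) n = OnePoint.infty ↔ ∃ m < n + 1, x m = OnePoint.infty := by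
  classical
  rw [coord_Q]
  split_ifs with h
  · exact iff_of_true rfl (h.imp fun m hm => ⟨hm.1.trans n.lt_succ_self, hm.2⟩)
  · refine ⟨fun hn => ⟨n, n.lt_succ_self, hn⟩, fun ⟨m, hm, hxm⟩ => ?_⟩
    rcases (Nat.lt_succ_iff.1 hm).lt_or_eq with hlt | rfl
    · exact absurd ⟨m, hlt, hxm⟩ h
    · exact hxm

theorem exists_first_infty {x : ∀ n, OnePoint (X n)} {n : ℕ}
    (h : ∃ m < n, x m = OnePoint.infty) :
    ∃ m < n, x m = OnePoint.infty ∧ ∀ j < m, x j ≠ OnePoint.infty := by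
  classical
  have hex : ∃ m, x m = OnePoint.infty := h.imp fun _ hm => hm.2
  obtain ⟨m, hm, hxm⟩ := h
  exact ⟨Nat.find hex, (Nat.find_min' hex hxm).trans_lt hm, Nat.find_spec hex,
    fun j hj => Nat.find_min hex hj⟩

theorem eq_infty_of_coord_Q_eq {x y : ∀ n, OnePoint (X n)} (h : coord (Q x) = coord (Q y))
    {m : ℕ} (hxm : x m = OnePoint.infty) (hmin : ∀ j < m, x j ≠ OnePoint.infty) :
    y m = OnePoint.infty := by
  obtain ⟨j, hj, hyj⟩ := (coord_Q_eq_infty_iff y m).1 <|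
    h ▸ (coord_Q_eq_infty_iff x m).2 ⟨m, m.lt_succ_self, hxm⟩
  obtain ⟨i, hi, hxi⟩ := (coord_Q_eq_infty_iff x j).1 <|
    h ▸ (coord_Q_eq_infty_iff y j).2 ⟨j, j.lt_succ_self, hyj⟩
  obtain rfl : j = m := by
    have : ¬ i < m := fun h => hmin i h hxi
    omega
  exact hyj

theorem exists_lt_eq_infty_of_forall {x y : ∀ n, OnePoint (X n)}
    (h : ∀ n, x n = y n ∨ ∃ m < n, x m = OnePoint.infty ∧ y m = OnePoint.infty) {n : ℕ}
    (hx : ∃ m < n, x m = OnePoint.infty) : ∃ m < n, y m = OnePoint.infty := by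
  obtain ⟨m, hm, hxm, hmin⟩ := exists_first_infty hx
  rcases h m with hxy | ⟨j, hj, hxj, -⟩
  · exact ⟨m, hm, hxy ▸ hxm⟩
  · exact absurd hxj (hmin j hj)

theorem Q_eq_Q_iff (x y : ∀ n, OnePoint (X n)) :
    Q x = Q y ↔ ∀ n, x n = y n ∨ ∃ m < n, x m = OnePoint.infty ∧ y m = OnePoint.infty := by
  classical
  constructor
  · intro h n
    have hc : coord (Q x) = coord (Q y) := congrArg coord h
    by_cases hx : ∃ m < n, x m = OnePoint.infty
    · obtain ⟨m, hm, hxm, hmin⟩ := exists_first_infty hx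
      exact Or.inr ⟨m, hm, hxm, eq_infty_of_coord_Q_eq hc hxm hmin⟩
    · by_cases hy : ∃ m < n, y m = OnePoint.infty
      · obtain ⟨m, hm, hym, hmin⟩ := exists_first_infty hy
        exact Or.inr ⟨m, hm, eq_infty_of_coord_Q_eq hc.symm hym hmin, hym⟩
      · have := congrFun hc n
        rw [coord_Q, coord_Q, if_neg hx, if_neg hy] at this
        exact Or.inl this
  · intro h
    have h' : ∀ n, y n = x n ∨ ∃ m < n, y m = OnePoint.infty ∧ x m = OnePoint.infty :=
      fun n => (h n).imp Eq.symm fun ⟨m, hm, hxm, hym⟩ => ⟨m, hm, hym, hxm⟩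
    refine coord_injective (funext fun n => ?_)
    rw [coord_Q, coord_Q]
    by_cases hx : ∃ m < n, x m = OnePoint.infty
    · rw [if_pos hx, if_pos (exists_lt_eq_infty_of_forall h hx)]
    · have hy : ¬ ∃ m < n, y m = OnePoint.infty :=
        fun hy => hx (exists_lt_eq_infty_of_forall h' hy)
      rw [if_neg hx, if_neg hy]
      exact (h n).resolve_right fun ⟨m, hm, hxm, _⟩ => hx ⟨m, hm, hxm⟩

variable [∀ n, TopologicalSpace (X n)]

theorem isClosed_setOf_Q_eq_Q [∀ n, LocallyCompactSpace (X n)] [∀ n, T2Space (X n)] :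
    IsClosed {p : (∀ n, OnePoint (X n)) × (∀ n, OnePoint (X n)) | Q p.1 = Q p.2} := by
  have hker : {p : (∀ n, OnePoint (X n)) × (∀ n, OnePoint (X n)) | Q p.1 = Q p.2} =
      ⋂ n, ({p | p.1 n = p.2 n} ∪ ⋃ m ∈ Set.Iio n,
        {p | p.1 m = OnePoint.infty} ∩ {p | p.2 m = OnePoint.infty}) := by
    ext p
    simp only [Q_eq_Q_iff, Set.mem_ofPred_eq, Set.mem_iInter, Set.mem_union, Set.mem_iUnion,
      Set.mem_inter_iff, Set.mem_Iio, exists_prop]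
  rw [hker]
  refine isClosed_iInter fun n => (isClosed_eq (by fun_prop) (by fun_prop)).union ?_
  exact (Set.finite_Iio n).isClosed_biUnion fun m _ =>
    (isClosed_eq (by fun_prop) continuous_const).inter (isClosed_eq (by fun_prop) continuous_const)

theorem isQuotientMap_Q : Topology.IsQuotientMap (Q : (∀ n, OnePoint (X n)) → W0 X) :=
  ⟨⟨rfl⟩, Q_surjective⟩

end W0

/-- Theorem 3.2: for locally compact, second countable, Hausdorff spaces `X_n`, the
space `W₀`, with the quotient topology induced by the truncation map
`Q : Π_n X_n^∞ → W₀`, is a compact metrizable space. -/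
theorem stmt6 (X : ℕ → Type) [∀ n, TopologicalSpace (X n)]
    [∀ n, LocallyCompactSpace (X n)] [∀ n, SecondCountableTopology (X n)]
    [∀ n, T2Space (X n)] :
    CompactSpace (W0 X) ∧ TopologicalSpace.MetrizableSpace (W0 X) := by
  have hQ := (W0.isQuotientMap_Q (X := X)).isProperMap_of_isClosed_ker W0.isClosed_setOf_Q_eq_Q
  have : CompactSpace (W0 X) := W0.Q_surjective.compactSpace hQ.continuous
  have : T2Space (W0 X) := hQ.t2Space_of_isClosed_ker W0.Q_surjective W0.isClosed_setOf_Q_eq_Q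
  have : SecondCountableTopology (W0 X) := hQ.secondCountableTopology W0.Q_surjective
  exact ⟨inferInstance, inferInstance⟩
end
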